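/- Let ϑₙ = π(1 − 2⁻ⁿ), ζₙ = e^{iϑₙ}, uₙ(z) = Re((ζₙ + z)/(ζₙ − z)), γ = (γₙ) ∈ ℓ¹, and u = Σₙ γₙ uₙ. Then for every k ≥ 1, lim_{r→1⁻} (1 − r) · u(r ζ_k) = 2 γ_k. -/

import Mathlib

open Complex MeasureTheory Filter Set

noncomputable section

/-- `ϑₙ = π(1 - 2⁻⁽ⁿ⁺¹⁾)` (indexing from `n = 0`, so this is the paper's `ϑ_{n+1}`). -/
def theta (n : ℕ) : ℝ := Real.pi * (1 - (1 / 2 : ℝ) ^ (n + 1))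

def zeta (n : ℕ) : ℂ := Complex.exp (theta n * Complex.I)

def uP (n : ℕ) (z : ℂ) : ℝ := ((zeta n + z) / (zeta n - z)).re

/-! Multiplying the Herglotz kernel `(ζ + z)/(ζ - z)` by `1 - r` along the radius `z = r w` kills
every term with `ζ ≠ w`, leaves `2` for `ζ = w`, and keeps all terms bounded by `2`; dominated
convergence for series then extracts `2 γ_k` from `(1 - r) u(r ζ_k)`. The points `ζₙ` are
distinct because their arguments `ϑₙ ∈ (0, π)` are. -/

open Topology

lemma one_sub_mul_abs_re_herglotz_le {ζ z : ℂ} (hζ : ‖ζ‖ = 1) (hz : ‖z‖ < 1) :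
    (1 - ‖z‖) * |((ζ + z) / (ζ - z)).re| ≤ 1 + ‖z‖ := by
  have hden : 1 - ‖z‖ ≤ ‖ζ - z‖ := hζ ▸ norm_sub_norm_le ζ z
  have hnum : ‖ζ + z‖ ≤ 1 + ‖z‖ := hζ ▸ norm_add_le ζ z
  calc (1 - ‖z‖) * |((ζ + z) / (ζ - z)).re|
      ≤ ‖ζ - z‖ * (‖ζ + z‖ / ‖ζ - z‖) := by
        rw [← norm_div]
        exact mul_le_mul hden (abs_re_le_norm _) (abs_nonneg _) (norm_nonneg _)
    _ ≤ 1 + ‖z‖ := by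
        rw [mul_div_cancel₀ _ (by linarith)]
        exact hnum

lemma one_sub_mul_re_herglotz_self {ζ : ℂ} (hζ : ζ ≠ 0) {r : ℝ} (hr : r ≠ 1) :
    (1 - r) * ((ζ + r * ζ) / (ζ - r * ζ)).re = 1 + r := by
  have hr' : (1 : ℝ) - r ≠ 0 := sub_ne_zero.mpr hr.symm
  have hquot : (ζ + r * ζ) / (ζ - r * ζ) = ((1 + r) / (1 - r) : ℝ) := by
    rw [← one_add_mul, ← one_sub_mul, mul_div_mul_right _ _ hζ]
    push_cast
    rfl
  rw [hquot, ofReal_re]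
  field_simp

lemma tendsto_one_sub_mul_re_herglotz_self {ζ : ℂ} (hζ : ζ ≠ 0) :
    Tendsto (fun r : ℝ => (1 - r) * ((ζ + r * ζ) / (ζ - r * ζ)).re) (𝓝[<] 1) (𝓝 2) := by
  have hlim : Tendsto (fun r : ℝ => 1 + r) (𝓝[<] 1) (𝓝 2) := by
    simpa [one_add_one_eq_two] using
      (tendsto_const_nhds.add tendsto_id : Tendsto (fun r : ℝ => 1 + r) (𝓝 1) (𝓝 (1 + 1)))
        |>.mono_left nhdsWithin_le_nhds
  refine hlim.congr' ?_
  filter_upwards [self_mem_nhdsWithin] with r hr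
  exact (one_sub_mul_re_herglotz_self hζ (ne_of_lt hr)).symm

lemma tendsto_one_sub_mul_re_herglotz_of_ne {ζ w : ℂ} (hζw : ζ ≠ w) :
    Tendsto (fun r : ℝ => (1 - r) * ((ζ + r * w) / (ζ - r * w)).re) (𝓝 1) (𝓝 0) := by
  have hcont : ContinuousAt (fun r : ℝ => (1 - r) * ((ζ + r * w) / (ζ - r * w)).re) 1 := by
    refine continuousAt_const.sub continuousAt_id |>.mul
      (continuous_re.continuousAt.comp (ContinuousAt.div (by fun_prop) (by fun_prop) ?_))
    simpa [sub_eq_zero] using hζw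
  simpa using hcont.tendsto

lemma norm_zeta (n : ℕ) : ‖zeta n‖ = 1 :=
  norm_exp_ofReal_mul_I (theta n)

lemma theta_mem_Ioo (n : ℕ) : theta n ∈ Ioo 0 Real.pi := by
  have hpow : (1 / 2 : ℝ) ^ (n + 1) ∈ Ioo 0 1 :=
    ⟨by positivity, pow_lt_one₀ (by norm_num) (by norm_num) n.succ_ne_zero⟩
  unfold theta
  constructor <;> nlinarith [hpow.1, hpow.2, Real.pi_pos]

lemma theta_injective : Function.Injective theta := fun n m h =>
  Nat.succ_injective <| pow_right_injective₀ (by norm_num : (0 : ℝ) < 1 / 2) (by norm_num) <| by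
    simpa [theta, Real.pi_ne_zero] using h

lemma arg_zeta (n : ℕ) : arg (zeta n) = theta n := by
  have h := theta_mem_Ioo n
  rw [zeta, arg_exp_mul_I, toIocMod_eq_self]
  constructor <;> linarith [h.1, h.2, Real.pi_pos]

lemma zeta_injective : Function.Injective zeta := fun n m h =>
  theta_injective <| by rw [← arg_zeta, ← arg_zeta, h]

lemma tendsto_one_sub_mul_uP (n k : ℕ) :
    Tendsto (fun r : ℝ => (1 - r) * uP n (r * zeta k)) (𝓝[<] 1)
      (𝓝 (if n = k then 2 else 0)) := by
  split_ifs with hnk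
  · subst hnk
    exact tendsto_one_sub_mul_re_herglotz_self (exp_ne_zero _)
  · exact (tendsto_one_sub_mul_re_herglotz_of_ne (zeta_injective.ne hnk)).mono_left
      nhdsWithin_le_nhds

lemma one_sub_mul_abs_uP_le (n k : ℕ) {r : ℝ} (hr : r ∈ Ico 0 1) :
    (1 - r) * |uP n (r * zeta k)| ≤ 2 := by
  have hnorm : ‖(r : ℂ) * zeta k‖ = r := by
    rw [norm_mul, norm_zeta, norm_real, Real.norm_of_nonneg hr.1, mul_one]
  have h := one_sub_mul_abs_re_herglotz_le (norm_zeta n) (hnorm.symm ▸ hr.2 : ‖(r : ℂ) * zeta k‖ < 1)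
  rw [hnorm] at h
  unfold uP
  linarith [hr.2]

/-- For `γ ∈ ℓ¹` and `u = Σ γₙ uₙ`, along the radius toward `ζ_k` one has
`(1 - r) u(r ζ_k) → 2 γ_k` as `r → 1⁻`. -/
theorem radial_limit_detects_coefficient (γ : ℕ → ℝ)
    (hγ : Summable fun n : ℕ => |γ n|)
    (u : ℂ → ℝ) (hu : u = fun z : ℂ => ∑' n : ℕ, γ n * uP n z) (k : ℕ) :
    Filter.Tendsto (fun r : ℝ => (1 - r) * u ((r : ℂ) * zeta k))
      (nhdsWithin 1 (Set.Iio (1 : ℝ))) (nhds (2 * γ k)) := by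
  subst hu
  have hterm : ∀ n, Tendsto (fun r : ℝ => γ n * ((1 - r) * uP n (r * zeta k))) (𝓝[<] 1)
      (𝓝 (if n = k then 2 * γ k else 0)) := fun n => by
    convert (tendsto_one_sub_mul_uP n k).const_mul (γ n) using 2
    split_ifs with hnk <;> simp [hnk, mul_comm]
  have hbound : ∀ᶠ r : ℝ in 𝓝[<] 1, ∀ n, ‖γ n * ((1 - r) * uP n (r * zeta k))‖ ≤ 2 * |γ n| := by
    filter_upwards [Ico_mem_nhdsLT (zero_lt_one' ℝ)] with r hr n
    rw [Real.norm_eq_abs, abs_mul, abs_mul, abs_of_pos (sub_pos.mpr hr.2), mul_comm 2]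
    exact mul_le_mul_of_nonneg_left (one_sub_mul_abs_uP_le n k hr) (abs_nonneg _)
  have h := tendsto_tsum_of_dominated_convergence (hγ.mul_left 2) hterm hbound
  rw [tsum_ite_eq] at h
  refine h.congr fun r => ?_
  simp only [← tsum_mul_left, mul_left_comm]
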